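/- arXiv:2103.14618 — 2 statements merged into one kernel-verified Lean document; each statement's English description precedes it below -/
import Mathlib

section
/- For every real quadratic field K, there exists a matrix B ∈ SL(2,ℤ) with tr B > 2 whose eigenvalue λ > 1 satisfies ℚ(λ) = K. -/
open Polynomial IntermediateField Module

private lemma quad_int {x : ℝ} {T c : ℚ} (hroot : x ^ 2 + (T : ℝ) * x + (c : ℝ) = 0) :
    IsIntegral ℚ x := by
  refine ⟨X ^ 2 + C T * X + C c, ?_, ?_⟩
  · monicity!
  · rw [← Polynomial.aeval_def]
    simp only [map_add, map_mul, map_pow, aeval_X, aeval_C]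
    simpa using hroot

private lemma quad_deg {x : ℝ} (hirr : Irrational x) (hint : IsIntegral ℚ x)
    {T c : ℚ} (hroot : x ^ 2 + (T : ℝ) * x + (c : ℝ) = 0) :
    (minpoly ℚ x).natDegree = 2 := by
  have hnr : x ∉ (algebraMap ℚ ℝ).range := by
    rintro ⟨q, rfl⟩
    exact hirr ⟨q, (eq_ratCast (algebraMap ℚ ℝ) q).symm⟩
  have h2 : 2 ≤ (minpoly ℚ x).natDegree := (minpoly.two_le_natDegree_iff hint).mpr hnr
  have hdvd : minpoly ℚ x ∣ (X ^ 2 + C T * X + C c) := by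
    refine minpoly.dvd ℚ x ?_
    simp only [map_add, map_mul, map_pow, aeval_X, aeval_C]
    simpa using hroot
  have hne : (X ^ 2 + C T * X + C c : ℚ[X]) ≠ 0 := by
    have : (X ^ 2 + C T * X + C c : ℚ[X]).Monic := by monicity!
    exact this.ne_zero
  have hle : (minpoly ℚ x).natDegree ≤ 2 := by
    have := Polynomial.natDegree_le_of_dvd hdvd hne
    have hdeg : (X ^ 2 + C T * X + C c : ℚ[X]).natDegree = 2 := by compute_degree!
    omega
  omega

private lemma adjoin_eq_of_deg2 {K : IntermediateField ℚ ℝ} (hK : Module.finrank ℚ K = 2)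
    {x : ℝ} (hx : x ∈ K) (hint : IsIntegral ℚ x)
    (hdeg : (minpoly ℚ x).natDegree = 2) :
    IntermediateField.adjoin ℚ {x} = K := by
  have : FiniteDimensional ℚ K := FiniteDimensional.of_finrank_pos (by omega)
  refine IntermediateField.eq_of_le_of_finrank_eq ?_ ?_
  · rw [IntermediateField.adjoin_le_iff]
    simpa using hx
  · rw [hK]
    rw [show IntermediateField.adjoin ℚ {x} = ℚ⟮x⟯ from rfl,
      IntermediateField.adjoin.finrank hint, hdeg]

/-- For every real quadratic field `K`, there is a matrix `B ∈ SL(2,ℤ)` with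
`tr B > 2` whose eigenvalue `λ > 1` satisfies `ℚ(λ) = K`. -/
theorem stmt_8 (K : IntermediateField ℚ ℝ) (hK : Module.finrank ℚ K = 2) :
    ∃ B : Matrix.SpecialLinearGroup (Fin 2) ℤ,
      2 < Matrix.trace (B : Matrix (Fin 2) (Fin 2) ℤ) ∧
      ∃ lam : ℝ, 1 < lam ∧
        lam ^ 2 - ((Matrix.trace ((B : Matrix (Fin 2) (Fin 2) ℤ)) : ℤ) : ℝ) * lam + 1 = 0 ∧
        IntermediateField.adjoin ℚ {lam} = K := by
  have hfd : FiniteDimensional ℚ K := FiniteDimensional.of_finrank_pos (by omega)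
  -- Find an irrational element α ∈ K
  have hKne : K ≠ ⊥ := by
    intro h
    rw [← IntermediateField.finrank_eq_one_iff] at h
    omega
  have hnle : ¬(K ≤ ⊥) := fun h => hKne (le_antisymm h bot_le)
  obtain ⟨α, hαK, hαb⟩ := SetLike.not_le_iff_exists.mp hnle
  clear hnle
  have hαirr : Irrational α := by
    rintro ⟨q, hq⟩
    exact hαb (IntermediateField.mem_bot.mpr ⟨q, by rw [eq_ratCast (algebraMap ℚ ℝ) q, hq]⟩)
  -- α is integral over ℚ with minpoly of degree at most 2
  have hα' : IsIntegral ℚ (⟨α, hαK⟩ : K) := IsIntegral.of_finite ℚ _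
  have hαint : IsIntegral ℚ α := IntermediateField.isIntegral_iff.mp hα'
  have hmpeq : minpoly ℚ (algebraMap K ℝ (⟨α, hαK⟩ : K)) = minpoly ℚ (⟨α, hαK⟩ : K) :=
    minpoly.algebraMap_eq (algebraMap K ℝ).injective _
  have hdegle : (minpoly ℚ α).natDegree ≤ 2 := by
    have h1 := minpoly.natDegree_le (A := ℚ) (⟨α, hαK⟩ : K)
    rw [hK] at h1
    have : minpoly ℚ α = minpoly ℚ (⟨α, hαK⟩ : K) := by simpa using hmpeq
    rw [this]; exact h1
  have hnr : α ∉ (algebraMap ℚ ℝ).range := by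
    rintro ⟨q, rfl⟩
    exact hαirr ⟨q, (eq_ratCast (algebraMap ℚ ℝ) q).symm⟩
  have hdeg2 : (minpoly ℚ α).natDegree = 2 := by
    have := (minpoly.two_le_natDegree_iff hαint).mpr hnr
    omega
  -- extract the quadratic relation α² + bα + c = 0
  set p := minpoly ℚ α with hp
  set b : ℚ := p.coeff 1 with hb
  set c : ℚ := p.coeff 0 with hc
  have hrel : α ^ 2 + (b : ℝ) * α + (c : ℝ) = 0 := by
    have hsum := Polynomial.aeval_eq_sum_range (R := ℚ) (p := p) α
    rw [minpoly.aeval, hdeg2] at hsum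
    rw [Finset.sum_range_succ, Finset.sum_range_succ, Finset.sum_range_succ,
      Finset.sum_range_zero] at hsum
    have hlead : p.coeff 2 = 1 := by
      have := (minpoly.monic hαint).leadingCoeff
      rwa [Polynomial.leadingCoeff, hdeg2] at this
    rw [hlead] at hsum
    simp only [Rat.smul_def, pow_zero, pow_one, mul_one, Rat.cast_one, one_mul] at hsum
    push_cast at hsum ⊢
    linarith [hsum]
  -- build a positive irrational square root of an integer inside K
  set β : ℝ := α + (b / 2 : ℚ) with hβ
  have hβK : β ∈ K := by
    exact add_mem hαK (SubfieldClass.ratCast_mem K (b / 2))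
  clear hαb
  have hβirr : Irrational β := by
    have := hαirr.ratCast_add (q := b / 2)
    simpa [hβ, add_comm] using this
  set D : ℚ := b ^ 2 / 4 - c with hD
  have hβ2 : β ^ 2 = (D : ℝ) := by
    push_cast [hβ, hD]
    linear_combination hrel
  set d : ℤ := D.num * (D.den : ℤ) with hd
  set r : ℝ := (D.den : ℝ) * β with hr
  have hden0 : (D.den : ℚ) ≠ 0 := by exact_mod_cast D.den_ne_zero
  have hr2 : r ^ 2 = (d : ℝ) := by
    have h1 : D * (D.den : ℚ) = (D.num : ℚ) := by
      nth_rewrite 1 [← Rat.num_div_den D]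
      exact div_mul_cancel₀ _ hden0
    have hDnum : (D.den : ℚ) ^ 2 * D = (D.num : ℚ) * (D.den : ℚ) := by
      rw [pow_two]
      linear_combination (D.den : ℚ) * h1
    rw [hr, mul_pow, hβ2, hd]
    push_cast
    calc (D.den : ℝ) ^ 2 * (D : ℝ) = (((D.den : ℚ) ^ 2 * D : ℚ) : ℝ) := by push_cast; ring
    _ = (D.num : ℝ) * (D.den : ℝ) := by rw [hDnum]; push_cast; ring
  have hrK : r ∈ K := mul_mem (by exact_mod_cast SubfieldClass.ratCast_mem K (D.den : ℚ)) hβK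
  have hrirr : Irrational r := by
    have := hβirr.ratCast_mul (q := (D.den : ℚ)) hden0
    simpa [hr] using this
  have hr0 : r ≠ 0 := fun h => hrirr ⟨0, by simp [h]⟩
  have hdpos : 0 < d := by
    have : (0 : ℝ) < (d : ℝ) := by rw [← hr2]; positivity
    exact_mod_cast this
  have hdns : ¬IsSquare d := by
    rintro ⟨k, hk⟩
    have hrk : r ^ 2 = (k : ℝ) ^ 2 := by
      rw [hr2, hk]; push_cast; ring
    rcases sq_eq_sq_iff_eq_or_eq_neg.mp hrk with h | h
    · exact hrirr ⟨(k : ℚ), by rw [h]; push_cast; ring⟩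
    · exact hrirr ⟨(-k : ℚ), by rw [h]; push_cast; ring⟩
  -- positive square root s
  obtain ⟨s, hsK, hsirr, hs2, hspos⟩ :
      ∃ s : ℝ, s ∈ K ∧ Irrational s ∧ s ^ 2 = (d : ℝ) ∧ 0 < s := by
    rcases lt_or_gt_of_ne hr0 with h | h
    · exact ⟨-r, neg_mem hrK, hrirr.neg, by rw [neg_pow]; simpa using hr2, by linarith⟩
    · exact ⟨r, hrK, hrirr, hr2, h⟩
  -- Pell solution
  obtain ⟨a, hax, hay⟩ := Pell.Solution₁.exists_pos_of_not_isSquare hdpos hdns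
  have hprop : a.x ^ 2 - d * a.y ^ 2 = 1 := a.prop
  -- the matrix
  refine ⟨⟨!![2 * a.x, -1; 1, 0], by simp [Matrix.det_fin_two_of]⟩, ?_, ?_⟩
  · rw [Matrix.trace_fin_two_of]
    omega
  · set lam : ℝ := (a.x : ℝ) + (a.y : ℝ) * s with hlam
    have htr : Matrix.trace !![2 * a.x, -1; (1 : ℤ), 0] = 2 * a.x := by
      rw [Matrix.trace_fin_two_of]; ring
    have hpropR : (a.x : ℝ) ^ 2 - (d : ℝ) * (a.y : ℝ) ^ 2 = 1 := by exact_mod_cast hprop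
    have hroot : lam ^ 2 + ((-(2 * a.x) : ℚ) : ℝ) * lam + ((1 : ℚ) : ℝ) = 0 := by
      push_cast
      rw [hlam]
      linear_combination ((a.y : ℝ)) ^ 2 * hs2 - hpropR
    have hlamirr : Irrational lam := by
      have h1 : Irrational ((a.y : ℝ) * s) := by
        have := hsirr.intCast_mul (m := a.y) (by omega)
        simpa using this
      have := h1.intCast_add a.x
      simpa [hlam] using this
    have hlamint : IsIntegral ℚ lam := quad_int hroot
    have hlamdeg : (minpoly ℚ lam).natDegree = 2 := quad_deg hlamirr hlamint hroot
    have hlamK : lam ∈ K := by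
      refine add_mem ?_ (mul_mem ?_ hsK) <;>
        exact_mod_cast SubfieldClass.ratCast_mem K ((_ : ℤ) : ℚ)
    refine ⟨lam, ?_, ?_, adjoin_eq_of_deg2 hK hlamK hlamint hlamdeg⟩
    · have h2 : (2 : ℝ) ≤ (a.x : ℝ) := by exact_mod_cast (by omega : (2 : ℤ) ≤ a.x)
      have : 0 < (a.y : ℝ) * s := mul_pos (by exact_mod_cast hay) hspos
      linarith
    · show lam ^ 2 - ((Matrix.trace !![2 * a.x, -1; (1 : ℤ), 0] : ℤ) : ℝ) * lam + 1 = 0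
      rw [htr]
      push_cast at hroot ⊢
      linarith [hroot]
end

section
/- Let B ∈ SL(2,ℤ) with tr B > 2 and eigenvalue λ > 1, and let S(B) = {M ∈ GL(2,ℤ) : MBM^{-1} = B} be the symmetry group of B. Then every M ∈ S(B) is of the form xI₂ + yB with x, y ∈ ℚ such that x + yλ is a unit in the ring of integers of ℚ(λ). -/
/-- Let `B ∈ SL(2,ℤ)` with `tr B > 2` and eigenvalue `λ = (tr B + √((tr B)²-4))/2 > 1`.
Every symmetry `M ∈ GL(2,ℤ)` of `B` (i.e. `MBM⁻¹ = B`) is of the form `xI₂ + yB` with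
`x, y ∈ ℚ` such that `x + yλ` is a unit in the ring of integers of `ℚ(λ)`. -/
theorem stmt_15 (B : Matrix (Fin 2) (Fin 2) ℤ) (hdet : B.det = 1)
    (htr : 2 < Matrix.trace B) (lam : ℝ)
    (hlam : lam = (((Matrix.trace B : ℤ) : ℝ) +
      Real.sqrt (((Matrix.trace B : ℤ) : ℝ) ^ 2 - 4)) / 2)
    (M : Matrix (Fin 2) (Fin 2) ℤ) (hM : IsUnit M.det) (hMB : M * B = B * M) :
    ∃ x y : ℚ, M.map (Int.cast : ℤ → ℚ) =
        x • (1 : Matrix (Fin 2) (Fin 2) ℚ) + y • (B.map (Int.cast : ℤ → ℚ)) ∧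
      IsIntegral ℤ ((x : ℝ) + (y : ℝ) * lam) ∧
      IsIntegral ℤ ((x : ℝ) + (y : ℝ) * lam)⁻¹ := by
  set a := B 0 0 with ha
  set b := B 0 1 with hb
  set c := B 1 0 with hc
  set d := B 1 1 with hd
  have hdet2 : a * d - b * c = 1 := by
    have := hdet; rwa [Matrix.det_fin_two] at this
  have htr2 : Matrix.trace B = a + d := by rw [Matrix.trace_fin_two]
  set p := M 0 0 with hp
  set q := M 0 1 with hq
  set r := M 1 0 with hr
  set s := M 1 1 with hs
  have e01 : p * b + q * d = a * q + b * s := by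
    have := congrFun (congrFun hMB 0) 1
    simpa [Matrix.mul_apply, Fin.sum_univ_two, ← ha, ← hb, ← hc, ← hd, ← hp, ← hq, ← hr, ← hs]
      using this
  have e10 : r * a + s * c = c * p + d * r := by
    have := congrFun (congrFun hMB 1) 0
    simpa [Matrix.mul_apply, Fin.sum_univ_two, ← ha, ← hb, ← hc, ← hd, ← hp, ← hq, ← hr, ← hs]
      using this
  have e00 : p * a + q * c = a * p + b * r := by
    have := congrFun (congrFun hMB 0) 0
    simpa [Matrix.mul_apply, Fin.sum_univ_two, ← ha, ← hb, ← hc, ← hd, ← hp, ← hq, ← hr, ← hs]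
      using this
  have hbc : b ≠ 0 ∨ c ≠ 0 := by
    by_contra h
    push_neg at h
    obtain ⟨hb0, hc0⟩ := h
    rw [hb0, hc0] at hdet2
    have had : a * d = 1 := by linarith
    rcases Int.eq_one_or_neg_one_of_mul_eq_one' had with ⟨h1, h2⟩ | ⟨h1, h2⟩ <;>
      rw [htr2] at htr <;> omega
  -- define x, y
  set y : ℚ := if hb0 : b ≠ 0 then (q : ℚ) / (b : ℚ) else (r : ℚ) / (c : ℚ) with hy
  set x : ℚ := (p : ℚ) - y * (a : ℚ) with hx
  have hqc : q * c = b * r := by linarith [e00]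
  -- entry facts over ℚ
  have hyb : (q : ℚ) = y * b := by
    rcases eq_or_ne b 0 with hb0 | hb0
    · have hcne : c ≠ 0 := by rcases hbc with h | h; exact absurd hb0 h; exact h
      have : q = 0 := by
        have := hqc; rw [hb0] at this; simp at this
        rcases this with h | h
        · exact h
        · exact absurd h hcne
      simp [hy, hb0, this]
    · rw [hy, dif_pos hb0]
      field_simp
  have hyc : (r : ℚ) = y * c := by
    rcases eq_or_ne b 0 with hb0 | hb0
    · have hcne : c ≠ 0 := by rcases hbc with h | h; exact absurd hb0 h; exact h
      rw [hy, dif_neg (by simpa using hb0)]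
      field_simp
    · rw [hy, dif_pos hb0]
      have : (q : ℚ) * c = b * r := by exact_mod_cast congrArg (Int.cast : ℤ → ℚ) hqc
      field_simp
      linarith [this]
  have hsx : (s : ℚ) = x + y * d := by
    rcases eq_or_ne b 0 with hb0 | hb0
    · have hcne : c ≠ 0 := by rcases hbc with h | h; exact absurd hb0 h; exact h
      have h10 : (r : ℚ) * a + s * c = c * p + d * r := by exact_mod_cast congrArg (Int.cast : ℤ → ℚ) e10
      rw [hx]
      have hyv : y = (r : ℚ) / c := by rw [hy, dif_neg (by simpa using hb0)]
      have hcq : (c : ℚ) ≠ 0 := by exact_mod_cast hcne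
      rw [hyv]
      field_simp
      linarith [h10]
    · have h01 : (p : ℚ) * b + q * d = a * q + b * s := by exact_mod_cast congrArg (Int.cast : ℤ → ℚ) e01
      have hbq : (b : ℚ) ≠ 0 := by exact_mod_cast hb0
      rw [hx]
      have hyv : y = (q : ℚ) / b := by rw [hy, dif_pos hb0]
      rw [hyv]
      field_simp
      linarith [h01]
  refine ⟨x, y, ?_, ?_⟩
  · ext i j
    fin_cases i <;> fin_cases j <;>
      simp [Matrix.map_apply, Matrix.one_apply, ← ha, ← hb, ← hc, ← hd, ← hp, ← hq, ← hr, ← hs]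
    · rw [hx]; ring
    · exact hyb
    · exact hyc
    · rw [hsx]
  · -- integrality
    set t : ℝ := ((Matrix.trace B : ℤ) : ℝ) with ht
    have htR : (3 : ℝ) ≤ t := by
      have h3 : (3 : ℤ) ≤ Matrix.trace B := by omega
      rw [ht]; exact_mod_cast h3
    have h4 : (0 : ℝ) ≤ t ^ 2 - 4 := by nlinarith
    have hlam2 : lam ^ 2 = t * lam - 1 := by
      rw [hlam]
      linear_combination (1 / 4 : ℝ) * Real.sq_sqrt h4
    have hpx : (p : ℚ) = x + y * a := by rw [hx]; ring
    have hTm : Matrix.trace M = p + s := Matrix.trace_fin_two M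
    have hDm : M.det = p * s - q * r := Matrix.det_fin_two M
    have hTQ : ((Matrix.trace M : ℤ) : ℚ) = 2 * x + y * ((Matrix.trace B : ℤ) : ℚ) := by
      rw [hTm, htr2]; push_cast; rw [hpx, hsx]; ring
    have hDQ : ((M.det : ℤ) : ℚ) = x ^ 2 + x * y * ((Matrix.trace B : ℤ) : ℚ) + y ^ 2 := by
      rw [hDm]
      push_cast
      rw [hpx, hsx, hyb, hyc]
      have : ((a : ℚ) * d - b * c) = 1 := by exact_mod_cast congrArg (Int.cast : ℤ → ℚ) hdet2
      rw [htr2]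
      push_cast
      nlinarith [this]
    set μ : ℝ := (x : ℝ) + (y : ℝ) * lam with hμ
    have hTR : ((Matrix.trace M : ℤ) : ℝ) = 2 * (x : ℝ) + (y : ℝ) * t := by
      rw [ht]; exact_mod_cast hTQ
    have hDR : ((M.det : ℤ) : ℝ) = (x : ℝ) ^ 2 + (x : ℝ) * (y : ℝ) * t + (y : ℝ) ^ 2 := by
      rw [ht]
      have h := congrArg (Rat.cast : ℚ → ℝ) hDQ
      simp only [Rat.cast_add, Rat.cast_mul, Rat.cast_pow, Rat.cast_intCast] at h
      linarith [h]
    have key : μ ^ 2 - ((Matrix.trace M : ℤ) : ℝ) * μ + ((M.det : ℤ) : ℝ) = 0 := by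
      rw [hTR, hDR, hμ]
      linear_combination (y : ℝ) ^ 2 * hlam2
    have hintT : IsIntegral ℤ ((Matrix.trace M : ℤ) : ℝ) := by
      simpa using isIntegral_algebraMap (R := ℤ) (A := ℝ) (x := Matrix.trace M)
    have hintD : IsIntegral ℤ ((M.det : ℤ) : ℝ) := by
      simpa using isIntegral_algebraMap (R := ℤ) (A := ℝ) (x := M.det)
    have hμint : IsIntegral ℤ μ := by
      refine ⟨Polynomial.X ^ 2 + Polynomial.C (-(Matrix.trace M)) * Polynomial.X +
        Polynomial.C M.det, ?_, ?_⟩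
      · rw [add_assoc]
        exact Polynomial.monic_X_pow_add
          (lt_of_le_of_lt (Polynomial.degree_linear_le) (by norm_num))
      · simp only [Polynomial.eval₂_add, Polynomial.eval₂_mul, Polynomial.eval₂_pow,
          Polynomial.eval₂_X, Polynomial.eval₂_C, Int.coe_castRingHom, Int.cast_neg,
          algebraMap_int_eq]
        linear_combination key
    have hD2 : ((M.det : ℤ) : ℝ) * ((M.det : ℤ) : ℝ) = 1 := by
      rcases Int.isUnit_iff.mp hM with h | h <;> rw [h] <;> norm_num
    have hmul : μ * (((M.det : ℤ) : ℝ) * (((Matrix.trace M : ℤ) : ℝ) - μ)) = 1 := by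
      linear_combination (-((M.det : ℤ) : ℝ)) * key + hD2
    refine ⟨hμint, ?_⟩
    rw [inv_eq_of_mul_eq_one_right hmul]
    exact hintD.mul (hintT.sub hμint)
end
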